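/- Set A = z³−3z²+1, u = z(z−1), B = w³−3w²+1, v = w(w−1). Then one has the identity of polynomials in ℤ[z,w]: (B² + 3Bv + 9v²)·A³·v − (B + 6v)³·u³ = − k₁(z,w) · k₂(z,w) · f(z,w). (Equivalently, g(A/u, B/v) = −(1/(z³(z−1)³w³(w−1)³)) · k₁(z,w)k₂(z,w)f(z,w) as rational functions, where g(x,y) = (y²+3y+9)x³ − (y+6)³.) -/
import Mathlib


open Polynomial

/-- `f(z,w) = w³ + (−z³+6z²−6z−1)w² + (z³−3z²+3z+1)w − z³`. -/
def fpoly {R : Type*} [CommRing R] (z w : R) : R :=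
  w ^ 3 + (-z ^ 3 + 6 * z ^ 2 - 6 * z - 1) * w ^ 2 + (z ^ 3 - 3 * z ^ 2 + 3 * z + 1) * w - z ^ 3

/-- `k₁(z,w)`. -/
def k1poly {R : Type*} [CommRing R] (z w : R) : R :=
  w ^ 3 * z ^ 3 - 2 * w ^ 2 * z ^ 3 - 3 * w ^ 2 * z ^ 2 + 2 * w * z ^ 3 + 3 * w ^ 2 * z - z ^ 3
    + w ^ 2 + 3 * z ^ 2 - w - 3 * z + 1

/-- `k₂(z,w)`. -/
def k2poly {R : Type*} [CommRing R] (z w : R) : R :=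
  w ^ 3 * z ^ 3 - 3 * w ^ 3 * z ^ 2 - w ^ 2 * z ^ 3 + 3 * w ^ 3 * z + 9 * w ^ 2 * z ^ 2
    + w * z ^ 3 - w ^ 3 - 9 * w ^ 2 * z - 6 * w * z ^ 2 + 2 * w ^ 2 + 6 * w * z - 2 * w + 1

/-- The variable `z` of `ℤ[z][w]` (inner variable). -/
noncomputable def zv : Polynomial (Polynomial ℤ) := Polynomial.C Polynomial.X

/-- The variable `w` of `ℤ[z][w]` (outer variable). -/
noncomputable def wv : Polynomial (Polynomial ℤ) := Polynomial.X

/-- With `A = z³−3z²+1`, `u = z(z−1)`, `B = w³−3w²+1`, `v = w(w−1)`, one has the identity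
`(B² + 3Bv + 9v²)·A³·v − (B + 6v)³·u³ = − k₁(z,w)·k₂(z,w)·f(z,w)` in `ℤ[z,w]`. -/
theorem statement3 :
    ((wv ^ 3 - 3 * wv ^ 2 + 1) ^ 2
        + 3 * (wv ^ 3 - 3 * wv ^ 2 + 1) * (wv * (wv - 1))
        + 9 * (wv * (wv - 1)) ^ 2)
      * (zv ^ 3 - 3 * zv ^ 2 + 1) ^ 3 * (wv * (wv - 1))
    - ((wv ^ 3 - 3 * wv ^ 2 + 1) + 6 * (wv * (wv - 1))) ^ 3 * (zv * (zv - 1)) ^ 3 =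
    -(k1poly zv wv * k2poly zv wv * fpoly zv wv) := by
  simp only [fpoly, k1poly, k2poly]; ring
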